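/- arXiv:1306.4437 — 6 statements merged into one kernel-verified Lean document; each statement's English description precedes it below -/
import Mathlib

section
/- Let b ∈ ℝ with b > 1/2, let A > 0 and s > 0. Then lim_{ε → 0⁺} ε^(b − 1/2) · ∫_{−s}^{s} (ε + A·x²)^(−b) dx = √(π/A) · Γ(b − 1/2)/Γ(b), where Γ denotes the Gamma function. -/
/-!
Writing `Γ(b) (1 + u²)^(-b) = ∫₀^∞ t^(b-1) e^{-(1+u²) t} dt` and integrating in `u` first
(a Gaussian, giving `√(π/t)`) evaluates `∫_ℝ (1 + u²)^(-b) du = √π Γ(b - 1/2) / Γ(b)` by Fubini.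
The substitution `x = √(ε/A) u` turns `ε^(b-1/2) ∫_{-s}^{s} (ε + A x²)^(-b) dx` into
`A^(-1/2) ∫_{-T}^{T} (1 + u²)^(-b) du` with `T = s √(A/ε) → ∞` as `ε → 0⁺`.
-/

open Filter Topology Real MeasureTheory Set

lemma integrable_one_add_sq_rpow_neg {b : ℝ} (hb : 1 / 2 < b) :
    Integrable fun x : ℝ => (1 + x ^ 2) ^ (-b) := by
  have h2b : (Module.finrank ℝ ℝ : ℝ) < 2 * b := by
    rw [Module.finrank_self, Nat.cast_one]; linarith
  simpa [neg_div] using integrable_rpow_neg_one_add_norm_sq (μ := volume) h2b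

lemma integral_one_add_sq_rpow_neg {b : ℝ} (hb : 1 / 2 < b) :
    ∫ x : ℝ, (1 + x ^ 2) ^ (-b) = √π * Gamma (b - 1 / 2) / Gamma b := by
  have hb0 : 0 < b := by linarith
  set F : ℝ → ℝ → ℝ := fun t u => t ^ (b - 1) * exp (-((1 + u ^ 2) * t)) with hF
  have hF_gauss : ∀ t u, F t u = t ^ (b - 1) * exp (-t) * exp (-t * u ^ 2) := fun t u => by
    rw [hF, mul_assoc, ← exp_add]; ring_nf
  have hF_t : ∀ u, ∫ t in Ioi 0, F t u = Gamma b * (1 + u ^ 2) ^ (-b) := fun u => by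
    have hu : 0 < 1 + u ^ 2 := by positivity
    rw [integral_rpow_mul_exp_neg_mul_Ioi hb0 hu, one_div, inv_rpow hu.le, ← rpow_neg hu.le,
      mul_comm]
  have hF_u : ∀ t ∈ Ioi (0 : ℝ), ∫ u, F t u = √π * (t ^ (b - 1 / 2 - 1) * exp (-(1 * t))) :=
    fun t (ht : 0 < t) => by
      simp_rw [hF_gauss, integral_const_mul, integral_gaussian, sqrt_div' _ ht.le, sqrt_eq_rpow,
        show b - 1 / 2 - 1 = b - 1 - 1 / 2 by ring, rpow_sub ht, one_mul]
      ring
  have hF_int : Integrable (Function.uncurry F) ((volume.restrict (Ioi 0)).prod volume) := by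
    rw [integrable_prod_iff (by fun_prop)]
    refine ⟨ae_restrict_of_forall_mem measurableSet_Ioi fun t (ht : 0 < t) => ?_, ?_⟩
    · simpa only [Function.uncurry_apply_pair, hF_gauss] using
        (integrable_exp_neg_mul_sq ht).const_mul _
    · refine ((GammaIntegral_convergent (by linarith : 0 < b - 1 / 2)).const_mul √π).congr ?_
      filter_upwards [ae_restrict_mem measurableSet_Ioi] with t (ht : 0 < t)
      have hnonneg : ∀ u, 0 ≤ F t u := fun u => by positivity
      simp only [Function.uncurry_apply_pair, norm_of_nonneg (hnonneg _), hF_u t ht]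
      ring_nf
  have hswap := integral_integral_swap hF_int
  rw [setIntegral_congr_fun measurableSet_Ioi hF_u, integral_const_mul,
    integral_rpow_mul_exp_neg_mul_Ioi (by linarith) one_pos, div_one, one_rpow, one_mul] at hswap
  simp_rw [hF_t, integral_const_mul] at hswap
  rw [eq_div_iff (Gamma_pos_of_pos hb0).ne', mul_comm, hswap]

lemma rpow_mul_intervalIntegral_add_mul_sq_rpow_neg {b A ε : ℝ} (s : ℝ) (hA : 0 < A)
    (hε : 0 < ε) :
    ε ^ (b - 1 / 2) * ∫ x in (-s)..s, (ε + A * x ^ 2) ^ (-b) =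
      (√A)⁻¹ * ∫ u in (-(s * √(A / ε)))..(s * √(A / ε)), (1 + u ^ 2) ^ (-b) := by
  set c := √(ε / A) with hc_def
  have hc : 0 < c := sqrt_pos.2 (div_pos hε hA)
  have hscale : ∀ x, (ε + A * x ^ 2) ^ (-b) = ε ^ (-b) * (1 + (x / c) ^ 2) ^ (-b) := fun x => by
    rw [← mul_rpow hε.le (by positivity), div_pow, sq_sqrt (div_pos hε hA).le]
    field_simp
  have hsc : s / c = s * √(A / ε) := by
    rw [div_eq_mul_inv, ← sqrt_inv, inv_div]
  have hpow : ε ^ (b - 1 / 2) * ε ^ (-b) * c = (√A)⁻¹ := by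
    rw [hc_def, sqrt_div' _ hA.le, sqrt_eq_rpow ε, mul_div_assoc', ← rpow_add hε, ← rpow_add hε,
      show b - 1 / 2 + -b + 1 / 2 = 0 by ring, rpow_zero, one_div]
  simp_rw [hscale, intervalIntegral.integral_const_mul,
    intervalIntegral.integral_comp_div (fun u => (1 + u ^ 2) ^ (-b)) hc.ne', smul_eq_mul, neg_div,
    hsc, ← hpow]
  ring

/-- Asymptotics of the model integral near a nondegenerate quadratic extremum:
`lim_{ε→0⁺} ε^(b-1/2) ∫_{-s}^{s} (ε + A x²)^(-b) dx = √(π/A) Γ(b-1/2)/Γ(b)`. -/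
theorem stmt4 (b A s : ℝ) (hb : 1 / 2 < b) (hA : 0 < A) (hs : 0 < s) :
    Tendsto (fun ε : ℝ => ε ^ (b - 1 / 2) * ∫ x in (-s)..s, (ε + A * x ^ 2) ^ (-b))
      (𝓝[>] (0:ℝ))
      (𝓝 (Real.sqrt (π / A) * Real.Gamma (b - 1 / 2) / Real.Gamma b)) := by
  have hT : Tendsto (fun ε : ℝ => s * √(A / ε)) (𝓝[>] 0) atTop := by
    simp_rw [div_eq_mul_inv]
    exact (tendsto_sqrt_atTop.comp (tendsto_inv_nhdsGT_zero.const_mul_atTop hA)).const_mul_atTop hs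
  have hlim := (intervalIntegral_tendsto_integral (integrable_one_add_sq_rpow_neg hb)
    (tendsto_neg_atTop_atBot.comp hT) hT).const_mul (√A)⁻¹
  rw [integral_one_add_sq_rpow_neg hb, ← mul_div_assoc, ← mul_assoc, inv_mul_eq_div,
    ← sqrt_div' _ hA.le] at hlim
  refine hlim.congr' ?_
  filter_upwards [self_mem_nhdsWithin] with ε (hε : 0 < ε)
  exact (rpow_mul_intervalIntegral_add_mul_sq_rpow_neg s hA hε).symm
end

section
/- Let λ ∈ [−1, 0), and let f : [0,1] → ℝ be continuous and non-constant with ∫₀¹ f(α) dα = 0; set m₀ = min f < 0 and M₀ = max f > 0. Then for every η with 0 ≤ η ≤ 1/(λ·m₀): 1 ≤ ∫₀¹ (1 − λ·η·f(α))^(−1/λ) dα ≤ (1 − M₀/m₀)^(−1/λ). -/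
/-!
For `p = -1/λ ≥ 1` the integrand is `(1 + g)^p` with `g = -λη f ≥ -1`, so Bernoulli's inequality
`(1 + g)^p ≥ 1 + p g` integrated against the mean-zero `f` gives the lower bound. The upper bound is
pointwise: `1 - λη f ≤ 1 - λη M₀ ≤ 1 - M₀/m₀` because `λη ≥ 1/m₀`, and `t ↦ t^p` is monotone on `[0, ∞)`.
-/

open Set intervalIntegral

theorem add_mul_integral_le_integral_one_add_rpow {g : ℝ → ℝ} {a b p : ℝ} (hab : a ≤ b)
    (hp : 1 ≤ p) (hg : ContinuousOn g (Icc a b)) (hg₁ : ∀ x ∈ Icc a b, -1 ≤ g x) :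
    (b - a) + p * ∫ x in a..b, g x ≤ ∫ x in a..b, (1 + g x) ^ p := by
  have hgi : IntervalIntegrable g MeasureTheory.volume a b :=
    (hg.mono (uIcc_of_le hab).subset).intervalIntegrable
  have hpow : IntervalIntegrable (fun x => (1 + g x) ^ p) MeasureTheory.volume a b := by
    refine ContinuousOn.intervalIntegrable ?_
    rw [uIcc_of_le hab]
    exact (continuousOn_const.add hg).rpow_const fun _ _ => Or.inr (by linarith)
  calc (b - a) + p * ∫ x in a..b, g x = ∫ x in a..b, (1 + p * g x) := by
        rw [integral_add intervalIntegrable_const (hgi.const_mul p), integral_const_mul]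
        simp
    _ ≤ ∫ x in a..b, (1 + g x) ^ p :=
        integral_mono_on hab (intervalIntegrable_const.add (hgi.const_mul p)) hpow
          fun x hx => one_add_mul_self_le_rpow_one_add (hg₁ x hx) hp

theorem integral_rpow_le_of_le {g : ℝ → ℝ} {a b p C : ℝ} (hab : a ≤ b) (hp : 0 ≤ p)
    (hg : ContinuousOn g (Icc a b)) (hg₀ : ∀ x ∈ Icc a b, 0 ≤ g x)
    (hgC : ∀ x ∈ Icc a b, g x ≤ C) :
    ∫ x in a..b, g x ^ p ≤ (b - a) * C ^ p := by
  have hpow : IntervalIntegrable (fun x => g x ^ p) MeasureTheory.volume a b := by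
    refine ContinuousOn.intervalIntegrable ?_
    rw [uIcc_of_le hab]
    exact hg.rpow_const fun _ _ => Or.inr hp
  calc ∫ x in a..b, g x ^ p ≤ ∫ _ in a..b, C ^ p :=
        integral_mono_on hab hpow intervalIntegrable_const
          fun x hx => Real.rpow_le_rpow (hg₀ x hx) (hgC x hx) hp
    _ = (b - a) * C ^ p := by simp

section Weight

variable {lam η m₀ : ℝ}

theorem one_le_neg_one_div (hlam : lam ∈ Ico (-1 : ℝ) 0) : 1 ≤ -1 / lam := by
  rw [le_div_iff_of_neg hlam.2]
  linarith [hlam.1]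

theorem neg_one_le_neg_mul_mul (hlam : lam < 0) (hm₀ : m₀ < 0) (hη₀ : 0 ≤ η)
    (hη : η ≤ 1 / (lam * m₀)) {y : ℝ} (hy : m₀ ≤ y) : -1 ≤ -(lam * η) * y := by
  have hkey : η * (lam * m₀) ≤ 1 := (le_div_iff₀ (mul_pos_of_neg_of_neg hlam hm₀)).mp hη
  nlinarith [mul_le_mul_of_nonpos_left hy (mul_nonpos_of_nonpos_of_nonneg hlam.le hη₀)]

theorem one_sub_mul_mul_le_one_sub_div (hlam : lam < 0) (hm₀ : m₀ < 0) (hη₀ : 0 ≤ η)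
    (hη : η ≤ 1 / (lam * m₀)) {y M₀ : ℝ} (hy : y ≤ M₀) (hM₀ : 0 ≤ M₀) :
    1 - lam * η * y ≤ 1 - M₀ / m₀ := by
  have hkey : η * (lam * m₀) ≤ 1 := (le_div_iff₀ (mul_pos_of_neg_of_neg hlam hm₀)).mp hη
  have hdiv : M₀ / m₀ ≤ lam * η * M₀ := by
    rw [div_le_iff_of_neg hm₀]
    nlinarith [mul_le_mul_of_nonneg_right hkey hM₀]
  nlinarith [mul_le_mul_of_nonpos_left hy (mul_nonpos_of_nonpos_of_nonneg hlam.le hη₀)]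

end Weight

theorem stmt8_general (lam : ℝ) (hlam : lam ∈ Set.Ico (-1 : ℝ) 0)
    (f : ℝ → ℝ) (hf : ContinuousOn f (Set.Icc 0 1))
    (hmean : (∫ α in (0:ℝ)..1, f α) = 0)
    (m₀ M₀ : ℝ) (hm₀ : IsLeast (f '' Set.Icc 0 1) m₀)
    (hM₀ : IsGreatest (f '' Set.Icc 0 1) M₀)
    (hm₀neg : m₀ < 0) (hM₀pos : 0 < M₀) :
    ∀ η : ℝ, 0 ≤ η → η ≤ 1 / (lam * m₀) →
      1 ≤ (∫ α in (0:ℝ)..1, (1 - lam * η * f α) ^ (-1 / lam)) ∧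
      (∫ α in (0:ℝ)..1, (1 - lam * η * f α) ^ (-1 / lam)) ≤
        (1 - M₀ / m₀) ^ (-1 / lam) := by
  intro η hη₀ hη
  have hp := one_le_neg_one_div hlam
  have hg₁ : ∀ α ∈ Icc (0:ℝ) 1, -1 ≤ -(lam * η) * f α := fun α hα =>
    neg_one_le_neg_mul_mul hlam.2 hm₀neg hη₀ hη (hm₀.2 ⟨α, hα, rfl⟩)
  constructor
  · have h := add_mul_integral_le_integral_one_add_rpow (g := fun α => -(lam * η) * f α)
      zero_le_one hp (continuousOn_const.mul hf) hg₁
    rw [integral_const_mul, hmean, mul_zero, mul_zero, sub_zero, add_zero] at h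
    simpa only [neg_mul, ← sub_eq_add_neg] using h
  · simpa using integral_rpow_le_of_le (g := fun α => 1 - lam * η * f α) zero_le_one
      (by linarith) (continuousOn_const.sub (continuousOn_const.mul hf))
      (fun α hα => by linarith [hg₁ α hα])
      (fun α hα => one_sub_mul_mul_le_one_sub_div hlam.2 hm₀neg hη₀ hη
        (hM₀.2 ⟨α, hα, rfl⟩) hM₀pos.le)

/-- Estimate (quick3): for `λ ∈ [-1,0)` and continuous non-constant mean-zero `f`,
`1 ≤ ∫₀¹ (1 - λ η f(α))^(-1/λ) dα ≤ (1 - M₀/m₀)^(-1/λ)` for `0 ≤ η ≤ 1/(λ m₀)`. -/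
theorem stmt8 (lam : ℝ) (hlam : lam ∈ Set.Ico (-1 : ℝ) 0)
    (f : ℝ → ℝ) (hf : ContinuousOn f (Set.Icc 0 1))
    (hnc : ∃ x ∈ Set.Icc (0:ℝ) 1, ∃ y ∈ Set.Icc (0:ℝ) 1, f x ≠ f y)
    (hmean : (∫ α in (0:ℝ)..1, f α) = 0)
    (m₀ M₀ : ℝ) (hm₀ : IsLeast (f '' Set.Icc 0 1) m₀)
    (hM₀ : IsGreatest (f '' Set.Icc 0 1) M₀)
    (hm₀neg : m₀ < 0) (hM₀pos : 0 < M₀) :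
    ∀ η : ℝ, 0 ≤ η → η ≤ 1 / (lam * m₀) →
      1 ≤ (∫ α in (0:ℝ)..1, (1 - lam * η * f α) ^ (-1 / lam)) ∧
      (∫ α in (0:ℝ)..1, (1 - lam * η * f α) ^ (-1 / lam)) ≤
        (1 - M₀ / m₀) ^ (-1 / lam) :=
  stmt8_general lam hlam f hf hmean m₀ M₀ hm₀ hM₀ hm₀neg hM₀pos
end

section
/- Let λ < −1, and let f : [0,1] → ℝ be continuous and non-constant with ∫₀¹ f(α) dα = 0; set m₀ = min f < 0. Then for every η with 0 ≤ η ≤ 1/(λ·m₀): 0 < ∫₀¹ (1 − f(α)/m₀)^(−1/λ) dα ≤ ∫₀¹ (1 − λ·η·f(α))^(−1/λ) dα ≤ 1. -/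
/-
The integrand of `K(c) = ∫₀¹ (1 - c f)^p`, with `p = -1/λ ∈ (0, 1)`, is corrected by the term
`p c f`, which integrates to zero because `f` has mean zero. Pointwise, `(1 - c t)^p + p c t` is
`h(1 - c t) + p` for the concave function `h(x) = x^p - p x`, whose maximum on `[0, ∞)` is at `1`
(Bernoulli's inequality). As `c` increases from `1/m₀` to `0`, the point `1 - c t` moves towards
`1`, so `h(1 - c t)` increases. Hence `K` is nondecreasing on `[1/m₀, 0]`, and `K(0) = 1`.
-/

open Real Set MeasureTheory

lemma rpow_sub_mul_le_one_sub {p x : ℝ} (hp₀ : 0 ≤ p) (hp₁ : p ≤ 1) (hx : 0 ≤ x) :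
    x ^ p - p * x ≤ 1 - p := by
  have := rpow_one_add_le_one_add_mul_self (s := x - 1) (by linarith) hp₀ hp₁
  rw [add_sub_cancel] at this
  linarith

lemma concaveOn_rpow_sub_mul {p : ℝ} (hp₀ : 0 ≤ p) (hp₁ : p ≤ 1) :
    ConcaveOn ℝ (Ici 0) fun x : ℝ ↦ x ^ p - p * x :=
  (concaveOn_rpow hp₀ hp₁).sub ((convexOn_id (convex_Ici 0)).smul hp₀)

lemma rpow_sub_mul_le_of_mem_uIcc {p x y : ℝ} (hp₀ : 0 ≤ p) (hp₁ : p ≤ 1) (hx : 0 ≤ x)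
    (hy : y ∈ uIcc x 1) : x ^ p - p * x ≤ y ^ p - p * y := by
  have h := (concaveOn_rpow_sub_mul hp₀ hp₁).ge_on_segment (mem_Ici.2 hx)
    (mem_Ici.2 zero_le_one) (by rwa [segment_eq_uIcc])
  simp only [one_rpow, mul_one] at h
  rwa [min_eq_left (rpow_sub_mul_le_one_sub hp₀ hp₁ hx)] at h

lemma one_sub_mul_mem_uIcc {a c : ℝ} (hac : a ≤ c) (hc : c ≤ 0) (t : ℝ) :
    1 - c * t ∈ uIcc (1 - a * t) 1 := by
  rcases le_total 0 t with ht | ht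
  · exact mem_uIcc.2 (Or.inr ⟨by nlinarith, by nlinarith⟩)
  · exact mem_uIcc.2 (Or.inl ⟨by nlinarith, by nlinarith⟩)

lemma one_sub_mul_rpow_add_mul_le {p a c t : ℝ} (hp₀ : 0 ≤ p) (hp₁ : p ≤ 1) (hac : a ≤ c)
    (hc : c ≤ 0) (ha : 0 ≤ 1 - a * t) :
    (1 - a * t) ^ p + p * a * t ≤ (1 - c * t) ^ p + p * c * t := by
  have := rpow_sub_mul_le_of_mem_uIcc hp₀ hp₁ ha (one_sub_mul_mem_uIcc hac hc t)
  linarith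

lemma one_sub_mul_nonneg_of_le {a c t : ℝ} (hac : a ≤ c) (hc : c ≤ 0) (ha : 0 ≤ 1 - a * t) :
    0 ≤ 1 - c * t :=
  (le_min ha zero_le_one).trans (one_sub_mul_mem_uIcc hac hc t).1

section

variable {f : ℝ → ℝ} {u v p : ℝ}

lemma continuousOn_one_sub_mul_rpow (hf : ContinuousOn f (Icc u v)) (hp : 0 ≤ p) (c : ℝ) :
    ContinuousOn (fun x ↦ (1 - c * f x) ^ p) (Icc u v) :=
  (continuousOn_const.sub (continuousOn_const.mul hf)).rpow_const fun _ _ ↦ Or.inr hp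

lemma integral_one_sub_mul_rpow_mono (huv : u ≤ v) (hf : ContinuousOn f (Icc u v))
    (hmean : ∫ x in u..v, f x = 0) (hp₀ : 0 ≤ p) (hp₁ : p ≤ 1) {a c : ℝ} (hac : a ≤ c)
    (hc : c ≤ 0) (ha : ∀ x ∈ Icc u v, 0 ≤ 1 - a * f x) :
    ∫ x in u..v, (1 - a * f x) ^ p ≤ ∫ x in u..v, (1 - c * f x) ^ p := by
  rw [← uIcc_of_le huv] at hf
  have hint (b : ℝ) :
      IntervalIntegrable (fun x ↦ (1 - b * f x) ^ p + p * b * f x) volume u v :=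
    (continuousOn_one_sub_mul_rpow hf hp₀ b).intervalIntegrable.add
      (hf.intervalIntegrable.const_mul _)
  have hcorrect (b : ℝ) :
      ∫ x in u..v, ((1 - b * f x) ^ p + p * b * f x) = ∫ x in u..v, (1 - b * f x) ^ p := by
    rw [intervalIntegral.integral_add (continuousOn_one_sub_mul_rpow hf hp₀ b).intervalIntegrable
      (hf.intervalIntegrable.const_mul _), intervalIntegral.integral_const_mul, hmean, mul_zero,
      add_zero]
  rw [← hcorrect a, ← hcorrect c]
  exact intervalIntegral.integral_mono_on huv (hint a) (hint c) fun x hx ↦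
    one_sub_mul_rpow_add_mul_le hp₀ hp₁ hac hc (ha x hx)

end

/-- Estimate (newest): for `λ < -1` and continuous non-constant mean-zero `f`,
`0 < ∫₀¹ (1 - f/m₀)^(-1/λ) dα ≤ ∫₀¹ (1 - λ η f(α))^(-1/λ) dα ≤ 1`
for `0 ≤ η ≤ 1/(λ m₀)`. -/
theorem stmt9 (lam : ℝ) (hlam : lam < -1)
    (f : ℝ → ℝ) (hf : ContinuousOn f (Set.Icc 0 1))
    (hnc : ∃ x ∈ Set.Icc (0:ℝ) 1, ∃ y ∈ Set.Icc (0:ℝ) 1, f x ≠ f y)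
    (hmean : (∫ α in (0:ℝ)..1, f α) = 0)
    (m₀ : ℝ) (hm₀ : IsLeast (f '' Set.Icc 0 1) m₀) (hm₀neg : m₀ < 0) :
    ∀ η : ℝ, 0 ≤ η → η ≤ 1 / (lam * m₀) →
      0 < (∫ α in (0:ℝ)..1, (1 - f α / m₀) ^ (-1 / lam)) ∧
      (∫ α in (0:ℝ)..1, (1 - f α / m₀) ^ (-1 / lam)) ≤
        (∫ α in (0:ℝ)..1, (1 - lam * η * f α) ^ (-1 / lam)) ∧
      (∫ α in (0:ℝ)..1, (1 - lam * η * f α) ^ (-1 / lam)) ≤ 1 := by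
  intro η hη₀ hη₁
  have hlam₀ : lam < 0 := by linarith
  set p := -1 / lam
  have hp₀ : 0 < p := div_pos_of_neg_of_neg (by norm_num) hlam₀
  have hp₁ : p ≤ 1 := by rw [div_le_one_of_neg hlam₀]; linarith
  have hle (x : ℝ) (hx : x ∈ Icc 0 1) : m₀ ≤ f x := hm₀.2 ⟨x, hx, rfl⟩
  have hm₀f (x : ℝ) (hx : x ∈ Icc 0 1) : 0 ≤ 1 - m₀⁻¹ * f x := by
    rw [inv_mul_eq_div, sub_nonneg, div_le_one_of_neg hm₀neg]
    exact hle x hx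
  have hc₁ : m₀⁻¹ ≤ lam * η := by
    calc m₀⁻¹ = lam * (1 / (lam * m₀)) := by rw [mul_one_div, div_mul_cancel_left₀ hlam₀.ne]
      _ ≤ lam * η := mul_le_mul_of_nonpos_left hη₁ hlam₀.le
  have hc₀ : lam * η ≤ 0 := mul_nonpos_of_nonpos_of_nonneg hlam₀.le hη₀
  simp only [← inv_mul_eq_div]
  refine ⟨?_, integral_one_sub_mul_rpow_mono zero_le_one hf hmean hp₀.le hp₁ hc₁ hc₀ hm₀f, ?_⟩
  · obtain ⟨x, hx, y, hy, hxy⟩ := hnc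
    obtain ⟨z, hz, hm₀z⟩ : ∃ z ∈ Icc (0 : ℝ) 1, m₀ < f z := by
      by_contra! h
      exact hxy ((h x hx).antisymm (hle x hx) |>.trans ((h y hy).antisymm (hle y hy)).symm)
    refine intervalIntegral.integral_pos zero_lt_one (continuousOn_one_sub_mul_rpow hf hp₀.le _)
      (fun x hx ↦ rpow_nonneg (hm₀f x (Ioc_subset_Icc_self hx)) p) ⟨z, hz, rpow_pos_of_pos ?_ p⟩
    rw [inv_mul_eq_div, sub_pos, div_lt_one_of_neg hm₀neg]
    exact hm₀z
  · have hηf (x : ℝ) (hx : x ∈ Icc 0 1) : 0 ≤ 1 - lam * η * f x :=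
      one_sub_mul_nonneg_of_le hc₁ hc₀ (hm₀f x hx)
    simpa using integral_one_sub_mul_rpow_mono zero_le_one hf hmean hp₀.le hp₁ hc₀ le_rfl hηf
end

section
/- Let λ < −1, let f : [0,1] → ℝ be continuous and non-constant with ∫₀¹ f(α) dα = 0, set m₀ = min f < 0 and η* = 1/(λ·m₀) > 0. Define t* = ∫₀^{η*} ( ∫₀¹ (1 − λ·μ·f(α))^(−1/λ) dα )^{2λ} dμ. Then η* ≤ t* ≤ η* · ( ∫₀¹ (1 − f(α)/m₀)^(−1/λ) dα )^{2λ}; in particular t* is finite. -/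
/-!
Put `p = -1/λ ∈ (0, 1)` and `w = 1 - f/m₀`, so `w ≥ 0` on `[0, 1]` and `∫ w = 1`. For
`μ ∈ [0, η*]` and `t = λ m₀ μ ∈ [0, 1]` we have `1 - λ μ f = (1 - t) + t w`, so
`K̄₀(μ) = ∫ ((1 - t) + t w)^p`. Bernoulli's inequality `x^p ≤ p x + 1 - p` integrates to
`K̄₀ ≤ 1`, and concavity of `x ↦ x^p` gives `K̄₀(μ) ≥ (1 - t) + t K̄₀(η*) ≥ K̄₀(η*) > 0`.
As `2λ < 0`, `1 ≤ K̄₀(μ)^{2λ} ≤ K̄₀(η*)^{2λ}` on `[0, η*]`; integrate over `[0, η*]`.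
-/

open MeasureTheory Set

lemma Real.rpow_le_mul_add_one_sub {x p : ℝ} (hx : 0 ≤ x) (hp₀ : 0 ≤ p) (hp₁ : p ≤ 1) :
    x ^ p ≤ p * x + (1 - p) := by
  have := rpow_one_add_le_one_add_mul_self (s := x - 1) (by linarith) hp₀ hp₁
  rw [add_sub_cancel] at this
  linarith

lemma Real.rpow_sub_one_mul_le_rpow {x M p : ℝ} (hx : 0 ≤ x) (hxM : x ≤ M) (hp : p ≤ 1) :
    M ^ (p - 1) * x ≤ x ^ p := by
  rcases hx.eq_or_lt with rfl | hx
  · simpa using Real.rpow_nonneg le_rfl p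
  calc M ^ (p - 1) * x ≤ x ^ (p - 1) * x :=
        mul_le_mul_of_nonneg_right (Real.rpow_le_rpow_of_nonpos hx hxM (by linarith)) hx.le
    _ = x ^ p := by rw [← Real.rpow_add_one hx.ne', sub_add_cancel]

lemma intervalIntegral.mul_le_integral_and_integral_le_mul {g : ℝ → ℝ} {a b c d : ℝ}
    (hab : a ≤ b) (hg : IntervalIntegrable g volume a b)
    (h : ∀ x ∈ Icc a b, g x ∈ Icc c d) :
    (b - a) * c ≤ ∫ x in a..b, g x ∧ ∫ x in a..b, g x ≤ (b - a) * d := by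
  have hc := integral_mono_on hab intervalIntegrable_const hg fun x hx => (h x hx).1
  have hd := integral_mono_on hab hg intervalIntegrable_const fun x hx => (h x hx).2
  simp only [integral_const, smul_eq_mul] at hc hd
  exact ⟨hc, hd⟩

/-- With `w = 1 - f/m₀` and `t = λ m₀ μ` this is `K̄₀(μ)`. -/
noncomputable def interpPowIntegral (w : ℝ → ℝ) (p t : ℝ) : ℝ :=
  ∫ α in (0:ℝ)..1, (1 - t + t * w α) ^ p

section interpPowIntegral

variable {w : ℝ → ℝ} {p t : ℝ}

@[simp]
lemma interpPowIntegral_one : interpPowIntegral w p 1 = ∫ α in (0:ℝ)..1, w α ^ p := by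
  simp [interpPowIntegral]

lemma intervalIntegrable_interp_rpow (hw : ContinuousOn w (Icc 0 1)) (hp : 0 ≤ p) (t : ℝ) :
    IntervalIntegrable (fun α => (1 - t + t * w α) ^ p) volume 0 1 :=
  ((continuousOn_const.add (continuousOn_const.mul hw)).rpow_const fun _ _ => Or.inr hp)
    |>.intervalIntegrable_of_Icc zero_le_one

lemma intervalIntegrable_interp (hw : ContinuousOn w (Icc 0 1)) (t : ℝ) :
    IntervalIntegrable (fun α => 1 - t + t * w α) volume 0 1 :=
  intervalIntegrable_const.add ((hw.intervalIntegrable_of_Icc zero_le_one).const_mul t)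

lemma integral_interp (hw : ContinuousOn w (Icc 0 1)) (hw₁ : ∫ α in (0:ℝ)..1, w α = 1)
    (t : ℝ) : ∫ α in (0:ℝ)..1, (1 - t + t * w α) = 1 := by
  rw [intervalIntegral.integral_add intervalIntegrable_const
    ((hw.intervalIntegrable_of_Icc zero_le_one).const_mul t),
    intervalIntegral.integral_const_mul, hw₁]
  simp

lemma interpPowIntegral_le_one (hw : ContinuousOn w (Icc 0 1))
    (hw₀ : ∀ α ∈ Icc (0:ℝ) 1, 0 ≤ w α) (hw₁ : ∫ α in (0:ℝ)..1, w α = 1)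
    (hp₀ : 0 ≤ p) (hp₁ : p ≤ 1) (ht : t ∈ Icc (0:ℝ) 1) :
    interpPowIntegral w p t ≤ 1 := by
  have hbern : ∀ α ∈ Icc (0:ℝ) 1,
      (1 - t + t * w α) ^ p ≤ p * (1 - t + t * w α) + (1 - p) := fun α hα =>
    Real.rpow_le_mul_add_one_sub (by nlinarith [ht.1, ht.2, hw₀ α hα]) hp₀ hp₁
  have hlin : IntervalIntegrable (fun α => p * (1 - t + t * w α) + (1 - p)) volume 0 1 :=
    ((intervalIntegrable_interp hw t).const_mul p).add intervalIntegrable_const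
  calc interpPowIntegral w p t
      ≤ ∫ α in (0:ℝ)..1, (p * (1 - t + t * w α) + (1 - p)) :=
        intervalIntegral.integral_mono_on zero_le_one
          (intervalIntegrable_interp_rpow hw hp₀ t) hlin hbern
    _ = 1 := by
        rw [intervalIntegral.integral_add ((intervalIntegrable_interp hw t).const_mul p)
          intervalIntegrable_const, intervalIntegral.integral_const_mul, integral_interp hw hw₁]
        simp

lemma add_mul_interpPowIntegral_one_le (hw : ContinuousOn w (Icc 0 1))
    (hw₀ : ∀ α ∈ Icc (0:ℝ) 1, 0 ≤ w α) (hp₀ : 0 ≤ p) (hp₁ : p ≤ 1) (ht : t ∈ Icc (0:ℝ) 1) :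
    1 - t + t * interpPowIntegral w p 1 ≤ interpPowIntegral w p t := by
  have hconc : ∀ α ∈ Icc (0:ℝ) 1, 1 - t + t * w α ^ p ≤ (1 - t + t * w α) ^ p :=
    fun α hα => by
      simpa using (Real.concaveOn_rpow hp₀ hp₁).2 (mem_Ici.2 zero_le_one)
        (mem_Ici.2 (hw₀ α hα)) (sub_nonneg.2 ht.2) ht.1 (sub_add_cancel 1 t)
  have hwp : IntervalIntegrable (fun α => w α ^ p) volume 0 1 := by
    simpa using intervalIntegrable_interp_rpow hw hp₀ 1
  calc 1 - t + t * interpPowIntegral w p 1 = ∫ α in (0:ℝ)..1, (1 - t + t * w α ^ p) := by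
        rw [intervalIntegral.integral_add intervalIntegrable_const (hwp.const_mul t),
          intervalIntegral.integral_const_mul, interpPowIntegral_one]
        simp
    _ ≤ interpPowIntegral w p t :=
        intervalIntegral.integral_mono_on zero_le_one (intervalIntegrable_const.add
          (hwp.const_mul t)) (intervalIntegrable_interp_rpow hw hp₀ t) hconc

lemma interpPowIntegral_one_le (hw : ContinuousOn w (Icc 0 1))
    (hw₀ : ∀ α ∈ Icc (0:ℝ) 1, 0 ≤ w α) (hw₁ : ∫ α in (0:ℝ)..1, w α = 1)
    (hp₀ : 0 ≤ p) (hp₁ : p ≤ 1) (ht : t ∈ Icc (0:ℝ) 1) :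
    interpPowIntegral w p 1 ≤ interpPowIntegral w p t := by
  have h₁ := interpPowIntegral_le_one hw hw₀ hw₁ hp₀ hp₁ (right_mem_Icc.2 zero_le_one)
  have := add_mul_interpPowIntegral_one_le hw hw₀ hp₀ hp₁ ht
  nlinarith [mul_nonneg (sub_nonneg.2 ht.2) (sub_nonneg.2 h₁)]

/-- If `w ≤ M` on `[0, 1]` then `w ^ p ≥ M ^ (p - 1) w`, whose integral is `M ^ (p - 1) > 0`. -/
lemma interpPowIntegral_one_pos (hw : ContinuousOn w (Icc 0 1))
    (hw₀ : ∀ α ∈ Icc (0:ℝ) 1, 0 ≤ w α) (hw₁ : ∫ α in (0:ℝ)..1, w α = 1)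
    (hp₀ : 0 ≤ p) (hp₁ : p ≤ 1) : 0 < interpPowIntegral w p 1 := by
  obtain ⟨M, hM⟩ := isCompact_Icc.bddAbove_image hw
  have hM' : ∀ α ∈ Icc (0:ℝ) 1, w α ≤ max M 1 := fun α hα =>
    (hM (mem_image_of_mem w hα)).trans (le_max_left M 1)
  have hwp : IntervalIntegrable (fun α => w α ^ p) volume 0 1 := by
    simpa using intervalIntegrable_interp_rpow hw hp₀ 1
  have hlow := intervalIntegral.integral_mono_on zero_le_one
    ((hw.intervalIntegrable_of_Icc zero_le_one).const_mul (max M 1 ^ (p - 1))) hwp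
    fun α hα => Real.rpow_sub_one_mul_le_rpow (hw₀ α hα) (hM' α hα) hp₁
  rw [intervalIntegral.integral_const_mul, hw₁, mul_one] at hlow
  rw [interpPowIntegral_one]
  exact (Real.rpow_pos_of_pos (by positivity) _).trans_le hlow

lemma interpPowIntegral_pos (hw : ContinuousOn w (Icc 0 1))
    (hw₀ : ∀ α ∈ Icc (0:ℝ) 1, 0 ≤ w α) (hw₁ : ∫ α in (0:ℝ)..1, w α = 1)
    (hp₀ : 0 ≤ p) (hp₁ : p ≤ 1) (ht : t ∈ Icc (0:ℝ) 1) :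
    0 < interpPowIntegral w p t :=
  (interpPowIntegral_one_pos hw hw₀ hw₁ hp₀ hp₁).trans_le
    (interpPowIntegral_one_le hw hw₀ hw₁ hp₀ hp₁ ht)

lemma continuous_interpPowIntegral (hw : ContinuousOn w (Icc 0 1)) (hp : 0 ≤ p) :
    Continuous (interpPowIntegral w p) := by
  set W := IccExtend zero_le_one ((Icc 0 1).domRestrict w)
  have hW : Continuous W := (continuousOn_iff_continuous_domRestrict.1 hw).Icc_extend'
  have hwW : interpPowIntegral w p = fun t => ∫ α in (0:ℝ)..1, (1 - t + t * W α) ^ p := by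
    ext t
    refine intervalIntegral.integral_congr fun α hα => ?_
    rw [uIcc_of_le zero_le_one] at hα
    simp [W, IccExtend_of_mem zero_le_one _ hα, Set.domRestrict]
  rw [hwW]
  exact intervalIntegral.continuous_parametric_intervalIntegral_of_continuous'
    ((continuous_const.sub continuous_fst).add (continuous_fst.mul (hW.comp continuous_snd))
      |>.rpow_const fun _ => Or.inr hp) 0 1

lemma continuousOn_interpPowIntegral_rpow (hw : ContinuousOn w (Icc 0 1))
    (hw₀ : ∀ α ∈ Icc (0:ℝ) 1, 0 ≤ w α) (hw₁ : ∫ α in (0:ℝ)..1, w α = 1)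
    (hp₀ : 0 ≤ p) (hp₁ : p ≤ 1) (q : ℝ) :
    ContinuousOn (fun t => interpPowIntegral w p t ^ q) (Icc 0 1) :=
  (continuous_interpPowIntegral hw hp₀).continuousOn.rpow_const fun _ ht =>
    Or.inl (interpPowIntegral_pos hw hw₀ hw₁ hp₀ hp₁ ht).ne'

lemma interpPowIntegral_rpow_mem_Icc (hw : ContinuousOn w (Icc 0 1))
    (hw₀ : ∀ α ∈ Icc (0:ℝ) 1, 0 ≤ w α) (hw₁ : ∫ α in (0:ℝ)..1, w α = 1)
    (hp₀ : 0 ≤ p) (hp₁ : p ≤ 1) {q : ℝ} (hq : q ≤ 0) (ht : t ∈ Icc (0:ℝ) 1) :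
    interpPowIntegral w p t ^ q ∈ Icc 1 (interpPowIntegral w p 1 ^ q) :=
  ⟨Real.one_le_rpow_of_pos_of_le_one_of_nonpos
      (interpPowIntegral_pos hw hw₀ hw₁ hp₀ hp₁ ht)
      (interpPowIntegral_le_one hw hw₀ hw₁ hp₀ hp₁ ht) hq,
    Real.rpow_le_rpow_of_nonpos (interpPowIntegral_one_pos hw hw₀ hw₁ hp₀ hp₁)
      (interpPowIntegral_one_le hw hw₀ hw₁ hp₀ hp₁ ht) hq⟩

end interpPowIntegral

lemma integral_one_sub_div_eq_one {f : ℝ → ℝ} (hf : IntervalIntegrable f volume 0 1)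
    (hmean : ∫ α in (0:ℝ)..1, f α = 0) (m : ℝ) :
    ∫ α in (0:ℝ)..1, (1 - f α / m) = 1 := by
  rw [intervalIntegral.integral_sub intervalIntegrable_const (hf.div_const m),
    intervalIntegral.integral_div, hmean]
  simp

lemma integral_one_sub_mul_rpow_eq_interpPowIntegral (f : ℝ → ℝ) {m : ℝ} (hm : m ≠ 0)
    (lam μ p : ℝ) : ∫ α in (0:ℝ)..1, (1 - lam * μ * f α) ^ p =
      interpPowIntegral (fun α => 1 - f α / m) p (lam * m * μ) :=
  intervalIntegral.integral_congr fun α _ => by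
    congr 1
    field_simp
    ring

theorem stmt11_general (lam : ℝ) (hlam : lam < -1)
    (f : ℝ → ℝ) (hf : ContinuousOn f (Set.Icc 0 1))
    (hmean : (∫ α in (0:ℝ)..1, f α) = 0)
    (m₀ : ℝ) (hm₀ : IsLeast (f '' Set.Icc 0 1) m₀) (hm₀neg : m₀ < 0) :
    IntervalIntegrable
      (fun μ => (∫ α in (0:ℝ)..1, (1 - lam * μ * f α) ^ (-1 / lam)) ^ (2 * lam))
      MeasureTheory.volume 0 (1 / (lam * m₀)) ∧
    1 / (lam * m₀) ≤
      (∫ μ in (0:ℝ)..(1 / (lam * m₀)),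
        (∫ α in (0:ℝ)..1, (1 - lam * μ * f α) ^ (-1 / lam)) ^ (2 * lam)) ∧
    (∫ μ in (0:ℝ)..(1 / (lam * m₀)),
        (∫ α in (0:ℝ)..1, (1 - lam * μ * f α) ^ (-1 / lam)) ^ (2 * lam)) ≤
      (1 / (lam * m₀)) *
        (∫ α in (0:ℝ)..1, (1 - f α / m₀) ^ (-1 / lam)) ^ (2 * lam) := by
  have hc : 0 < lam * m₀ := mul_pos_of_neg_of_neg (by linarith) hm₀neg
  set p := -1 / lam
  have hp₀ : 0 ≤ p := div_nonneg_of_nonpos (by norm_num) (by linarith)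
  have hp₁ : p ≤ 1 := by rw [div_le_one_of_neg (by linarith)]; linarith
  set w := fun α => 1 - f α / m₀
  have hw : ContinuousOn w (Icc 0 1) := continuousOn_const.sub (hf.div_const m₀)
  have hw₀ : ∀ α ∈ Icc (0:ℝ) 1, 0 ≤ w α := fun α hα => by
    have := div_le_one_of_neg hm₀neg |>.2 (hm₀.2 (mem_image_of_mem f hα))
    simp only [w]; linarith
  have hw₁ : ∫ α in (0:ℝ)..1, w α = 1 :=
    integral_one_sub_div_eq_one (hf.intervalIntegrable_of_Icc zero_le_one) hmean m₀
  have hK₁ : ∫ α in (0:ℝ)..1, (1 - f α / m₀) ^ p = interpPowIntegral w p 1 := by simp [w]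
  have ht : MapsTo (fun μ => lam * m₀ * μ) (Icc 0 (1 / (lam * m₀))) (Icc 0 1) := fun μ hμ =>
    ⟨mul_nonneg hc.le hμ.1, by rw [← le_div_iff₀' hc]; exact hμ.2⟩
  have hint : IntervalIntegrable (fun μ => interpPowIntegral w p (lam * m₀ * μ) ^ (2 * lam))
      volume 0 (1 / (lam * m₀)) :=
    ((continuousOn_interpPowIntegral_rpow hw hw₀ hw₁ hp₀ hp₁ _).comp
      (continuous_const_mul _).continuousOn ht).intervalIntegrable_of_Icc (by positivity)
  simp only [integral_one_sub_mul_rpow_eq_interpPowIntegral f hm₀neg.ne, hK₁]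
  have := intervalIntegral.mul_le_integral_and_integral_le_mul (by positivity) hint fun μ hμ =>
    interpPowIntegral_rpow_mem_Icc hw hw₀ hw₁ hp₀ hp₁ (by linarith) (ht hμ)
  simp only [sub_zero, mul_one] at this
  exact ⟨hint, this⟩

/-- Estimate (lowt) plus finiteness: for `λ < -1`, the blow-up time
`t* = ∫₀^{η*} K̄₀(μ)^{2λ} dμ`, `η* = 1/(λ m₀)`, satisfies
`η* ≤ t* ≤ η* (∫₀¹ (1 - f/m₀)^(-1/λ) dα)^{2λ}`; in particular `t*` is finite
(the integrand is interval integrable). -/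
theorem stmt11 (lam : ℝ) (hlam : lam < -1)
    (f : ℝ → ℝ) (hf : ContinuousOn f (Set.Icc 0 1))
    (hnc : ∃ x ∈ Set.Icc (0:ℝ) 1, ∃ y ∈ Set.Icc (0:ℝ) 1, f x ≠ f y)
    (hmean : (∫ α in (0:ℝ)..1, f α) = 0)
    (m₀ : ℝ) (hm₀ : IsLeast (f '' Set.Icc 0 1) m₀) (hm₀neg : m₀ < 0)
    (hηstar : 0 < 1 / (lam * m₀)) :
    IntervalIntegrable
      (fun μ => (∫ α in (0:ℝ)..1, (1 - lam * μ * f α) ^ (-1 / lam)) ^ (2 * lam))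
      MeasureTheory.volume 0 (1 / (lam * m₀)) ∧
    1 / (lam * m₀) ≤
      (∫ μ in (0:ℝ)..(1 / (lam * m₀)),
        (∫ α in (0:ℝ)..1, (1 - lam * μ * f α) ^ (-1 / lam)) ^ (2 * lam)) ∧
    (∫ μ in (0:ℝ)..(1 / (lam * m₀)),
        (∫ α in (0:ℝ)..1, (1 - lam * μ * f α) ^ (-1 / lam)) ^ (2 * lam)) ≤
      (1 / (lam * m₀)) *
        (∫ α in (0:ℝ)..1, (1 - f α / m₀) ^ (-1 / lam)) ^ (2 * lam) :=
  stmt11_general lam hlam f hf hmean m₀ hm₀ hm₀neg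
end

section
/- Let λ ∈ ℝ, T > 0, and let u : ℝ × [0,T) → ℝ be twice continuously differentiable, with u(x + 1, t) = u(x, t) for all x ∈ ℝ and t ∈ [0,T). Suppose u satisfies ∂ₜ∂ₓu(x,t) + u(x,t)·∂ₓ²u(x,t) − λ·(∂ₓu(x,t))² = −(λ+1)·∫₀¹ (∂ₓu(y,t))² dy for all (x,t). Then for every t ∈ [0,T), the function E(t) = ∫₀¹ (∂ₓu(x,t))² dx is differentiable and E'(t) = (1 + 2λ)·∫₀¹ (∂ₓu(x,t))³ dx. -/
/-!
Multiplying the equation by `2 u_x` gives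
`∂ₜ (u_x²) = (1 + 2λ) u_x³ - ∂ₓ (u u_x²) + 2 I(t) u_x`,
and by periodicity the last two terms integrate to zero over a period. It remains to
differentiate `E` under the integral sign, which is legitimate because `u_x u_{xt}` is continuous
on `[0, 1] × [0, T)`: integrating in time and swapping the integrals (Fubini) writes `E` as a
primitive of the continuous function `t ↦ ∫₀¹ 2 u_x u_{xt} dx`.
-/

open Set Topology MeasureTheory intervalIntegral Function Interval

section ParametricIntegral

variable {E : Type*} [NormedAddCommGroup E] [NormedSpace ℝ E]

theorem continuousOn_intervalIntegral_of_continuousOn_prod {f : ℝ → ℝ → E} {a b : ℝ}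
    {K : Set ℝ} (hK : IsCompact K) (hf : ContinuousOn (uncurry f) (uIcc a b ×ˢ K)) :
    ContinuousOn (fun s => ∫ x in a..b, f x s) K := by
  obtain ⟨C, hC⟩ := (isCompact_uIcc.prod hK).exists_bound_of_continuousOn hf
  intro s₀ hs₀
  refine continuousWithinAt_of_dominated_interval (bound := fun _ => C) ?_ ?_
    intervalIntegrable_const (ae_of_all _ fun x hx => ?_)
  · filter_upwards [self_mem_nhdsWithin] with s hs
    refine ContinuousOn.aestronglyMeasurable (fun x hx => ?_) measurableSet_uIoc
    exact (hf.comp (continuousOn_id.prodMk continuousOn_const)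
      (fun y hy => ⟨uIoc_subset_uIcc hy, hs⟩)) x hx
  · filter_upwards [self_mem_nhdsWithin] with s hs
    exact ae_of_all _ fun x hx => hC (x, s) ⟨uIoc_subset_uIcc hx, hs⟩
  · exact (hf.comp (continuousOn_const.prodMk continuousOn_id)
      (fun s hs => ⟨uIoc_subset_uIcc hx, hs⟩)) s₀ hs₀

theorem intervalIntegral_integral_swap_of_continuousOn {f : ℝ → ℝ → E}
    {a b c d : ℝ} (hf : ContinuousOn (uncurry f) (uIcc a b ×ˢ uIcc c d)) :
    ∫ x in a..b, ∫ y in c..d, f x y = ∫ y in c..d, ∫ x in a..b, f x y := by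
  have hint :
      Integrable (uncurry f) ((volume.restrict (Ι a b)).prod (volume.restrict (Ι c d))) := by
    rw [Measure.prod_restrict, ← Measure.volume_eq_prod]
    exact (hf.integrableOn_compact (isCompact_uIcc.prod isCompact_uIcc)).mono_set
      (prod_mono uIoc_subset_uIcc uIoc_subset_uIcc)
  simp only [intervalIntegral_eq_integral_uIoc, MeasureTheory.integral_smul]
  rw [integral_integral_swap hint, smul_comm]

variable [CompleteSpace E]

theorem hasDerivWithinAt_intervalIntegral_Icc {f f' : ℝ → ℝ → E} {a b c d t : ℝ}
    (hf' : ContinuousOn (uncurry f') (uIcc a b ×ˢ Icc c d))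
    (hf : ∀ x ∈ uIcc a b, ∀ s ∈ Icc c d, HasDerivWithinAt (f x) (f' x s) (Icc c d) s)
    (hf₀ : IntervalIntegrable (fun x => f x c) volume a b) (ht : t ∈ Icc c d) :
    HasDerivWithinAt (fun s => ∫ x in a..b, f x s) (∫ x in a..b, f' x t) (Icc c d) t := by
  set G := fun s => ∫ x in a..b, f' x s
  have hG : ContinuousOn G (Icc c d) :=
    continuousOn_intervalIntegral_of_continuousOn_prod isCompact_Icc hf'
  have hprimitive : ∀ τ ∈ Icc c d,
      ∫ x in a..b, f x τ = (∫ x in a..b, f x c) + ∫ s in c..τ, G s := by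
    intro τ hτ
    have hsub : uIcc c τ ⊆ Icc c d := by
      rw [uIcc_of_le hτ.1]; exact Icc_subset_Icc_right hτ.2
    have hf'_swap : ContinuousOn (uncurry fun s x => f' x s) (uIcc c τ ×ˢ uIcc a b) :=
      hf'.comp continuous_swap.continuousOn fun p hp => ⟨hp.2, hsub hp.1⟩
    have hFTC : ∀ x ∈ uIcc a b, f x τ = f x c + ∫ s in c..τ, f' x s := by
      intro x hx
      rw [integral_eq_sub_of_hasDerivAt_of_le hτ.1
        (fun s hs => (hf x hx s (Icc_subset_Icc_right hτ.2 hs)).continuousWithinAt.mono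
          (Icc_subset_Icc_right hτ.2))
        (fun s hs => (hf x hx s ⟨hs.1.le, hs.2.le.trans hτ.2⟩).hasDerivAt
          (Icc_mem_nhds hs.1 (hs.2.trans_le hτ.2)))
        (ContinuousOn.intervalIntegrable fun s hs => ?_)]
      · abel
      · exact (hf'.comp (continuousOn_const.prodMk continuousOn_id)
          fun s hs => ⟨hx, hsub hs⟩) s hs
    have hint : IntervalIntegrable (fun x => ∫ s in c..τ, f' x s) volume a b :=
      (continuousOn_intervalIntegral_of_continuousOn_prod isCompact_uIcc
        hf'_swap).intervalIntegrable
    rw [integral_congr hFTC, integral_add hf₀ hint,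
      intervalIntegral_integral_swap_of_continuousOn (hf'.mono (prod_mono subset_rfl hsub))]
  have : Fact (t ∈ Icc c d) := ⟨ht⟩
  have hderiv : HasDerivWithinAt (fun τ => ∫ s in c..τ, G s) (G t) (Icc c d) t :=
    integral_hasDerivWithinAt_right
      (hG.mono (by rw [uIcc_of_le ht.1]; exact Icc_subset_Icc_right ht.2)).intervalIntegrable
      ⟨Icc c d, self_mem_nhdsWithin, hG.aestronglyMeasurable measurableSet_Icc⟩ (hG t ht)
  exact (hderiv.const_add _).congr hprimitive (hprimitive t ht)

theorem hasDerivWithinAt_intervalIntegral_Ico {f f' : ℝ → ℝ → E} {a b c d t : ℝ}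
    (hf' : ContinuousOn (uncurry f') (uIcc a b ×ˢ Ico c d))
    (hf : ∀ x ∈ uIcc a b, ∀ s ∈ Ico c d, HasDerivWithinAt (f x) (f' x s) (Ico c d) s)
    (hf₀ : IntervalIntegrable (fun x => f x c) volume a b) (ht : t ∈ Ico c d) :
    HasDerivWithinAt (fun s => ∫ x in a..b, f x s) (∫ x in a..b, f' x t) (Ico c d) t := by
  obtain ⟨e, hte, hed⟩ := exists_between ht.2
  have hsub : Icc c e ⊆ Ico c d := Icc_subset_Ico_right hed
  have hloc : Icc c e ∈ 𝓝[Ico c d] t :=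
    mem_nhdsWithin.2 ⟨Iio e, isOpen_Iio, hte, fun y hy => ⟨hy.2.1, le_of_lt hy.1⟩⟩
  exact (hasDerivWithinAt_intervalIntegral_Icc (hf'.mono (prod_mono subset_rfl hsub))
    (fun x hx s hs => (hf x hx s (hsub hs)).mono hsub) hf₀
    ⟨ht.1, hte.le⟩).mono_of_mem_nhdsWithin hloc

end ParametricIntegral

section PartialDerivatives

variable {E : Type*} [NormedAddCommGroup E] [NormedSpace ℝ E] {U : ℝ × ℝ → E}
  {L : ℝ × ℝ →L[ℝ] E} {I : Set ℝ} {x t : ℝ}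

theorem HasFDerivWithinAt.hasDerivAt_fst_slice (hU : HasFDerivWithinAt U L (univ ×ˢ I) (x, t))
    (ht : t ∈ I) : HasDerivAt (fun y => U (y, t)) (L (1, 0)) x := by
  have := hU.comp x (hasFDerivAt_prodMk_left (𝕜 := ℝ) x t).hasFDerivWithinAt
    fun y (_ : y ∈ univ) => (⟨mem_univ y, ht⟩ : (y, t) ∈ univ ×ˢ I)
  exact (hasFDerivWithinAt_univ.mp this).hasDerivAt

theorem HasFDerivWithinAt.hasDerivWithinAt_snd_slice
    (hU : HasFDerivWithinAt U L (univ ×ˢ I) (x, t)) :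
    HasDerivWithinAt (fun s => U (x, s)) (L (0, 1)) I t := by
  have := hU.comp t (hasFDerivAt_prodMk_right (𝕜 := ℝ) x t).hasFDerivWithinAt
    fun s hs => (⟨mem_univ x, hs⟩ : (x, s) ∈ univ ×ˢ I)
  exact this.hasDerivWithinAt

end PartialDerivatives

theorem ContDiffOn.exists_partialDerivs {u : ℝ → ℝ → ℝ} {I : Set ℝ}
    (hI : UniqueDiffOn ℝ I) (hu : ContDiffOn ℝ 2 (fun p : ℝ × ℝ => u p.1 p.2) (univ ×ˢ I)) :
    ∃ ux uxx uxt : ℝ → ℝ → ℝ, ContinuousOn (uncurry ux) (univ ×ˢ I) ∧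
      ContinuousOn (uncurry uxx) (univ ×ˢ I) ∧ ContinuousOn (uncurry uxt) (univ ×ˢ I) ∧
      ∀ x, ∀ t ∈ I, HasDerivAt (u · t) (ux x t) x ∧ HasDerivAt (ux · t) (uxx x t) x ∧
        HasDerivWithinAt (ux x) (uxt x t) I t := by
  set S : Set (ℝ × ℝ) := univ ×ˢ I
  have hS : UniqueDiffOn ℝ S := uniqueDiffOn_univ.prod hI
  have hfderiv : ∀ {w : ℝ × ℝ → ℝ}, DifferentiableOn ℝ w S → ∀ x, ∀ t ∈ I,
      HasFDerivWithinAt w (fderivWithin ℝ w S (x, t)) S (x, t) := fun hw x t ht =>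
    (hw _ ⟨mem_univ x, ht⟩).hasFDerivWithinAt
  set ux : ℝ × ℝ → ℝ := fun p => fderivWithin ℝ (fun q : ℝ × ℝ => u q.1 q.2) S p (1, 0)
  have hux : ContDiffOn ℝ 1 ux S :=
    (hu.fderivWithin hS (by norm_num)).clm_apply contDiffOn_const
  have hux' := hux.continuousOn_fderivWithin hS le_rfl
  refine ⟨curry ux, fun x t => fderivWithin ℝ ux S (x, t) (1, 0),
    fun x t => fderivWithin ℝ ux S (x, t) (0, 1), hux.continuousOn,
    hux'.clm_apply (continuousOn_const (c := ((1 : ℝ), (0 : ℝ)))),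
    hux'.clm_apply (continuousOn_const (c := ((0 : ℝ), (1 : ℝ)))),
    fun x t ht => ⟨?_, ?_, ?_⟩⟩
  · exact (hfderiv (hu.differentiableOn two_ne_zero) x t ht).hasDerivAt_fst_slice ht
  · exact (hfderiv (hux.differentiableOn one_ne_zero) x t ht).hasDerivAt_fst_slice ht
  · exact (hfderiv (hux.differentiableOn one_ne_zero) x t ht).hasDerivWithinAt_snd_slice

theorem integral_two_mul_deriv_mul_eq_of_periodic {φ φ' φ'' ψ : ℝ → ℝ} {a b lam c : ℝ}
    (hφ : ∀ x, HasDerivAt φ (φ' x) x) (hφ' : ∀ x, HasDerivAt φ' (φ'' x) x)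
    (hφ'' : Continuous φ'') (hper : φ b = φ a) (hper' : φ' b = φ' a)
    (hψ : ∀ x, ψ x + φ x * φ'' x - lam * φ' x ^ 2 = c) :
    ∫ x in a..b, 2 * φ' x * ψ x = (1 + 2 * lam) * ∫ x in a..b, φ' x ^ 3 := by
  have hφc : Continuous φ := continuous_iff_continuousAt.2 fun x => (hφ x).continuousAt
  have hφ'c : Continuous φ' := continuous_iff_continuousAt.2 fun x => (hφ' x).continuousAt
  have hmean : ∫ x in a..b, φ' x = 0 := by
    rw [integral_eq_sub_of_hasDerivAt (fun x _ => hφ x) (hφ'c.intervalIntegrable a b), hper,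
      sub_self]
  have hcube : ∫ x in a..b, (φ' x ^ 3 + 2 * φ x * φ' x * φ'' x) = 0 := by
    have hderiv : ∀ x, HasDerivAt (fun y => φ y * φ' y ^ 2)
        (φ' x ^ 3 + 2 * φ x * φ' x * φ'' x) x := fun x =>
      ((hφ x).fun_mul ((hφ' x).fun_pow 2)).congr_deriv (by ring)
    rw [integral_eq_sub_of_hasDerivAt (fun x _ => hderiv x)
      (Continuous.intervalIntegrable (by fun_prop) _ _), hper, hper', sub_self]
  calc ∫ x in a..b, 2 * φ' x * ψ x
      = ∫ x in a..b, ((1 + 2 * lam) * φ' x ^ 3 - (φ' x ^ 3 + 2 * φ x * φ' x * φ'' x)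
          + 2 * c * φ' x) :=
        integral_congr fun x _ => by rw [← hψ x]; ring
    _ = (1 + 2 * lam) * ∫ x in a..b, φ' x ^ 3 := by
        rw [intervalIntegral.integral_add, intervalIntegral.integral_sub,
          intervalIntegral.integral_const_mul, intervalIntegral.integral_const_mul, hmean, hcube]
        · ring
        all_goals exact Continuous.intervalIntegrable (by fun_prop) _ _

theorem hasDerivWithinAt_energy {u ux uxx uxt : ℝ → ℝ → ℝ} {c : ℝ → ℝ} {lam T t : ℝ}
    (hux : ContinuousOn (uncurry ux) (univ ×ˢ Ico 0 T))
    (huxx : ContinuousOn (uncurry uxx) (univ ×ˢ Ico 0 T))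
    (huxt : ContinuousOn (uncurry uxt) (univ ×ˢ Ico 0 T))
    (hu_x : ∀ x, ∀ s ∈ Ico 0 T, HasDerivAt (u · s) (ux x s) x)
    (hux_x : ∀ x, ∀ s ∈ Ico 0 T, HasDerivAt (ux · s) (uxx x s) x)
    (hux_t : ∀ x, ∀ s ∈ Ico 0 T, HasDerivWithinAt (ux x) (uxt x s) (Ico 0 T) s)
    (hper : ∀ x, ∀ s ∈ Ico 0 T, u (x + 1) s = u x s)
    (hpde : ∀ x, ∀ s ∈ Ico 0 T, uxt x s + u x s * uxx x s - lam * ux x s ^ 2 = c s)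
    (ht : t ∈ Ico 0 T) :
    HasDerivWithinAt (fun s => ∫ x in (0 : ℝ)..1, ux x s ^ 2)
      ((1 + 2 * lam) * ∫ x in (0 : ℝ)..1, ux x t ^ 3) (Ico 0 T) t := by
  have hslice : ∀ {w : ℝ → ℝ → ℝ}, ContinuousOn (uncurry w) (univ ×ˢ Ico 0 T) →
      ∀ s ∈ Ico 0 T, Continuous (w · s) := fun hw s hs =>
    continuousOn_univ.1 <| hw.comp (continuousOn_id.prodMk continuousOn_const)
      fun x _ => ⟨mem_univ x, hs⟩
  have hux_per : ux 1 t = ux 0 t := by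
    have h : HasDerivAt (fun y => u (y + 1) t) (ux 1 t) 0 := by
      simpa using (hu_x ((0 : ℝ) + 1) t ht).comp_add_const (0 : ℝ) (1 : ℝ)
    simp only [hper _ t ht] at h
    exact h.unique (hu_x 0 t ht)
  rw [← integral_two_mul_deriv_mul_eq_of_periodic (hu_x · t ht) (hux_x · t ht)
    (hslice huxx t ht) (by simpa using hper 0 t ht) hux_per (hpde · t ht)]
  refine hasDerivWithinAt_intervalIntegral_Ico (f' := fun x s => 2 * ux x s * uxt x s)
    (((continuousOn_const.mul hux).mul huxt).mono (prod_mono (subset_univ _) subset_rfl))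
    (fun x _ s hs => ?_)
    (((hslice hux 0 ⟨le_rfl, ht.1.trans_lt ht.2⟩).fun_pow 2).intervalIntegrable 0 1) ht
  exact ((hux_t x s hs).pow 2).congr_deriv (by ring)

theorem stmt15_general (lam T : ℝ) (u : ℝ → ℝ → ℝ)
    (hreg : ContDiffOn ℝ 2 (fun p : ℝ × ℝ => u p.1 p.2) (univ ×ˢ Ico 0 T))
    (hper : ∀ x t : ℝ, t ∈ Ico (0:ℝ) T → u (x + 1) t = u x t)
    (hpde : ∀ x : ℝ, ∀ t ∈ Ico (0:ℝ) T,
      derivWithin (fun s => deriv (fun y => u y s) x) (Ico 0 T) t +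
          u x t * deriv (deriv (fun y => u y t)) x -
          lam * (deriv (fun y => u y t) x) ^ 2 =
        -(lam + 1) * ∫ y in (0:ℝ)..1, (deriv (fun z => u z t) y) ^ 2) :
    ∀ t ∈ Ico (0:ℝ) T,
      HasDerivWithinAt (fun s => ∫ x in (0:ℝ)..1, (deriv (fun y => u y s) x) ^ 2)
        ((1 + 2 * lam) * ∫ x in (0:ℝ)..1, (deriv (fun y => u y t) x) ^ 3)
        (Ico 0 T) t := by
  obtain ⟨ux, uxx, uxt, hux, huxx, huxt, hpartial⟩ :=
    hreg.exists_partialDerivs (uniqueDiffOn_Ico 0 T)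
  have hderiv_eq : ∀ s ∈ Ico 0 T, deriv (u · s) = (ux · s) := fun s hs =>
    funext fun x => (hpartial x s hs).1.deriv
  have hderiv_t : ∀ x, ∀ s ∈ Ico 0 T,
      HasDerivWithinAt (fun s => deriv (u · s) x) (uxt x s) (Ico 0 T) s := fun x s hs =>
    (hpartial x s hs).2.2.congr (fun r hr => by rw [hderiv_eq r hr]) (by rw [hderiv_eq s hs])
  have hpde' : ∀ x, ∀ s ∈ Ico 0 T, uxt x s + u x s * uxx x s - lam * ux x s ^ 2 =
      -(lam + 1) * ∫ y in (0:ℝ)..1, ux y s ^ 2 := fun x s hs => by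
    have h := hpde x s hs
    rwa [(hderiv_t x s hs).derivWithin (uniqueDiffOn_Ico 0 T s hs), hderiv_eq s hs,
      (hpartial x s hs).2.1.deriv] at h
  intro t ht
  rw [hderiv_eq t ht]
  exact (hasDerivWithinAt_energy hux huxx huxt (fun x s hs => (hpartial x s hs).1)
    (fun x s hs => (hpartial x s hs).2.1) (fun x s hs => (hpartial x s hs).2.2) hper hpde'
    ht).congr (fun s hs => by rw [hderiv_eq s hs]) (by rw [hderiv_eq t ht])

/-- Energy identity (dotderenergy): for a spatially 1-periodic `C²` solution of
`u_{xt} + u u_{xx} - λ u_x² = -(λ+1) ∫₀¹ u_x² dy`, the energy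
`E(t) = ∫₀¹ u_x² dx` satisfies `E'(t) = (1+2λ) ∫₀¹ u_x³ dx` on `[0,T)`. -/
theorem stmt15 (lam T : ℝ) (hT : 0 < T) (u : ℝ → ℝ → ℝ)
    (hreg : ContDiffOn ℝ 2 (fun p : ℝ × ℝ => u p.1 p.2) (univ ×ˢ Ico 0 T))
    (hper : ∀ x t : ℝ, t ∈ Ico (0:ℝ) T → u (x + 1) t = u x t)
    (hpde : ∀ x : ℝ, ∀ t ∈ Ico (0:ℝ) T,
      derivWithin (fun s => deriv (fun y => u y s) x) (Ico 0 T) t +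
          u x t * deriv (deriv (fun y => u y t)) x -
          lam * (deriv (fun y => u y t) x) ^ 2 =
        -(lam + 1) * ∫ y in (0:ℝ)..1, (deriv (fun z => u z t) y) ^ 2) :
    ∀ t ∈ Ico (0:ℝ) T,
      HasDerivWithinAt (fun s => ∫ x in (0:ℝ)..1, (deriv (fun y => u y s) x) ^ 2)
        ((1 + 2 * lam) * ∫ x in (0:ℝ)..1, (deriv (fun y => u y t) x) ^ 3)
        (Ico 0 T) t :=
  stmt15_general lam T u hreg hper hpde
end

section
/- Let λ ∈ [−1, 0), and let f : ℝ → ℝ be continuous, 1-periodic and non-constant with ∫₀¹ f(α) dα = 0; set m₀ = min_{[0,1]} f < 0 and η* = 1/(λ·m₀). For η ∈ (0, η*) and α ∈ [0,1] define J(α,η) = 1 − λ·η·f(α), K̄₀(η) = ∫₀¹ J(α,η)^(−1/λ) dα, K̄₁(η) = ∫₀¹ J(α,η)^(−1 − 1/λ) dα, and U(α,η) = (λ·η·K̄₀(η)^{2λ})^(−1) · ( J(α,η)^(−1) − K̄₁(η)/K̄₀(η) ). Then: (i) for every α̲ ∈ [0,1] with f(α̲) = m₀, U(α̲,η) → −∞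 as η → η*⁻; and (ii) for every α ∈ [0,1] with f(α) > m₀, sup_{η ∈ (0,η*)} |U(α,η)| < ∞. -/
/-!
Jensen's inequality for `t ↦ t ^ (-1/λ)` (convex since `λ ≥ -1`), applied to `J(·,η)`, which has
mean one because `f` has mean zero, gives `K̄₀ ≥ 1`. Writing `K̄₀ - K̄₁ = -λη ∫₀¹ J^(-1-1/λ) f`
cancels the factor `λη` of the prefactor:
`U(α,η) = K̄₀(η)^(-2λ) (f(α) / J(α,η) - M(η) / K̄₀(η))` with `M(η) = ∫₀¹ J^(-1-1/λ) f`.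
Both `K̄₀` and `M` are continuous in `η`, hence bounded on `[0,η*]`. At a minimizer
`J(α,η) = 1 - η/η* → 0⁺`, so `f(α)/J → -∞` while `K̄₀^(-2λ) ≥ 1`; elsewhere
`J(α,η) ≥ min(1, 1 - f(α)/m₀) > 0` and every term stays bounded.
-/

open Filter Topology Set intervalIntegral

section OneSubMulRpow
variable {f : ℝ → ℝ} {c p q : ℝ}

/-- Jensen's inequality for `t ↦ t ^ p`, in the form of Bernoulli's inequality. -/
lemma one_le_integral_one_sub_mul_rpow (hf : Continuous f) (hmean : ∫ x in (0:ℝ)..1, f x = 0)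
    (hpos : ∀ x ∈ Icc (0:ℝ) 1, 0 ≤ 1 - c * f x) (hp : 1 ≤ p) :
    1 ≤ ∫ x in (0:ℝ)..1, (1 - c * f x) ^ p := by
  have hBernoulli : ∀ x ∈ Icc (0:ℝ) 1, 1 - p * c * f x ≤ (1 - c * f x) ^ p := fun x hx => by
    have := one_add_mul_self_le_rpow_one_add (s := -(c * f x)) (by linarith [hpos x hx]) hp
    rw [← sub_eq_add_neg] at this
    linarith
  calc (1:ℝ) = ∫ x in (0:ℝ)..1, (1 - p * c * f x) := by
        simp [integral_sub, integral_const_mul, hf.intervalIntegrable, hmean]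
    _ ≤ ∫ x in (0:ℝ)..1, (1 - c * f x) ^ p :=
        integral_mono_on zero_le_one (Continuous.intervalIntegrable (by fun_prop) _ _)
          (Continuous.intervalIntegrable (by fun_prop (disch := linarith)) _ _) hBernoulli

lemma integral_one_sub_mul_rpow_of_eq_add_one (hf : Continuous f)
    (hpos : ∀ x ∈ Icc (0:ℝ) 1, 0 < 1 - c * f x) (hpq : p = q + 1) :
    ∫ x in (0:ℝ)..1, (1 - c * f x) ^ p
      = (∫ x in (0:ℝ)..1, (1 - c * f x) ^ q) - c * ∫ x in (0:ℝ)..1, (1 - c * f x) ^ q * f x := by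
  have hcont : ContinuousOn (fun x => (1 - c * f x) ^ q) (uIcc 0 1) := by
    rw [uIcc_of_le zero_le_one]
    exact (Continuous.continuousOn (by fun_prop)).rpow_const fun x hx => Or.inl (hpos x hx).ne'
  have hcont' : ContinuousOn (fun x => c * ((1 - c * f x) ^ q * f x)) (uIcc 0 1) :=
    continuousOn_const.mul (hcont.mul hf.continuousOn)
  have hsplit : EqOn (fun x => (1 - c * f x) ^ p)
      (fun x => (1 - c * f x) ^ q - c * ((1 - c * f x) ^ q * f x)) (uIcc 0 1) := fun x hx => by
    rw [uIcc_of_le zero_le_one] at hx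
    simp only [hpq, Real.rpow_add (hpos x hx), Real.rpow_one]
    ring
  rw [integral_congr hsplit, integral_sub hcont.intervalIntegrable hcont'.intervalIntegrable,
    integral_const_mul]

end OneSubMulRpow

lemma Filter.Tendsto.mul_sub_atBot_of_one_le {ι : Type*} {l : Filter ι} {w x z : ι → ℝ} {B : ℝ}
    (hw : ∀ᶠ i in l, 1 ≤ w i) (hx : Tendsto x l atBot) (hz : ∀ᶠ i in l, |z i| ≤ B) :
    Tendsto (fun i => w i * (x i - z i)) l atBot := by
  have hxB := tendsto_atBot_add_const_right l B hx
  refine tendsto_atBot_mono' l ?_ hxB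
  filter_upwards [hw, hz, hxB.eventually_le_atBot 0] with i hwi hzi hxi
  have : x i - z i ≤ x i + B := by linarith [neg_abs_le (z i)]
  nlinarith

namespace ProudmanJohnson

variable (lam : ℝ) (f : ℝ → ℝ)

noncomputable def J (α η : ℝ) : ℝ := 1 - lam * η * f α

/-- The paper's `K̄₀` and `K̄₁` are `K lam f (-1/lam)` and `K lam f (-1-1/lam)`. -/
noncomputable def K (r η : ℝ) : ℝ := ∫ α in (0:ℝ)..1, J lam f α η ^ r

noncomputable def M (η : ℝ) : ℝ := ∫ α in (0:ℝ)..1, J lam f α η ^ (-1 - 1 / lam) * f α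

noncomputable def U (α η : ℝ) : ℝ :=
  (lam * η * K lam f (-1 / lam) η ^ (2 * lam))⁻¹ *
    ((J lam f α η)⁻¹ - K lam f (-1 - 1 / lam) η / K lam f (-1 / lam) η)

variable {lam f} {m₀ η α : ℝ}

lemma J_pos (hlam : lam < 0) (hm₀neg : m₀ < 0) (hη : η ∈ Ioo 0 (1 / (lam * m₀)))
    (hα : m₀ ≤ f α) : 0 < J lam f α η := by
  have hlm : 0 < lam * m₀ := mul_pos_of_neg_of_neg hlam hm₀neg
  have hηlt : η * (lam * m₀) < 1 := (lt_div_iff₀ hlm).mp hη.2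
  have : lam * η * m₀ ≥ lam * η * f α :=
    mul_le_mul_of_nonpos_left hα (mul_nonpos_of_nonpos_of_nonneg hlam.le hη.1.le)
  unfold J
  nlinarith

lemma min_le_J (hlam : lam < 0) (hη : η ∈ Ioo 0 (1 / (lam * m₀))) :
    min 1 (1 - f α / m₀) ≤ J lam f α η := by
  unfold J
  rcases le_or_gt 0 (f α) with hfα | hfα
  · have : lam * η * f α ≤ 0 :=
      mul_nonpos_of_nonpos_of_nonneg (mul_nonpos_of_nonpos_of_nonneg hlam.le hη.1.le) hfα
    exact (min_le_left _ _).trans (by linarith)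
  · have hlf : 0 < lam * f α := mul_pos_of_neg_of_neg hlam hfα
    have hηlt : lam * η * f α < f α / m₀ := by
      have : η * (lam * f α) < 1 / (lam * m₀) * (lam * f α) := mul_lt_mul_of_pos_right hη.2 hlf
      calc lam * η * f α = η * (lam * f α) := by ring
        _ < 1 / (lam * m₀) * (lam * f α) := this
        _ = f α / m₀ := by rw [one_div_mul_eq_div, mul_div_mul_left _ _ hlam.ne]
    exact (min_le_right _ _).trans (by linarith)

lemma one_le_neg_one_div (hlam : lam ∈ Ico (-1 : ℝ) 0) : 1 ≤ -1 / lam := by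
  rw [le_div_iff_of_neg hlam.2]; linarith [hlam.1]

lemma one_le_K (hlam : lam ∈ Ico (-1 : ℝ) 0) (hf : Continuous f)
    (hmean : ∫ α in (0:ℝ)..1, f α = 0) (hJ : ∀ α ∈ Icc (0:ℝ) 1, 0 ≤ J lam f α η) :
    1 ≤ K lam f (-1 / lam) η :=
  one_le_integral_one_sub_mul_rpow hf hmean hJ (one_le_neg_one_div hlam)

lemma continuous_K (hf : Continuous f) {r : ℝ} (hr : 0 ≤ r) : Continuous (K lam f r) := by
  unfold K J; fun_prop (disch := assumption)

lemma continuous_M (hlam : lam ∈ Ico (-1 : ℝ) 0) (hf : Continuous f) : Continuous (M lam f) := by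
  have : 0 ≤ -1 - 1 / lam := by linarith [one_le_neg_one_div hlam, neg_div lam 1]
  unfold M J; fun_prop (disch := assumption)

lemma U_eq (hlam : lam ∈ Ico (-1 : ℝ) 0) (hf : Continuous f) (hmean : ∫ α in (0:ℝ)..1, f α = 0)
    (hη : η ≠ 0) (hJ : ∀ β ∈ Icc (0:ℝ) 1, 0 < J lam f β η) (hJα : J lam f α η ≠ 0) :
    U lam f α η = K lam f (-1 / lam) η ^ (-(2 * lam)) *
      (f α / J lam f α η - M lam f η / K lam f (-1 / lam) η) := by
  have hK₀ := one_le_K hlam hf hmean fun β hβ => (hJ β hβ).le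
  have hK : K lam f (-1 / lam) η = K lam f (-1 - 1 / lam) η - lam * η * M lam f η :=
    integral_one_sub_mul_rpow_of_eq_add_one hf hJ (by ring)
  have hlam₀ : lam ≠ 0 := hlam.2.ne
  unfold U
  rw [Real.rpow_neg (by linarith),
    show K lam f (-1 - 1 / lam) η = K lam f (-1 / lam) η + lam * η * M lam f η by linarith]
  set K₀ := K lam f (-1 / lam) η
  have hK₀ne : K₀ ≠ 0 := by linarith
  set P := K₀ ^ (2 * lam)
  have hP : P ≠ 0 := (Real.rpow_pos_of_pos (by linarith) _).ne'
  unfold J at hJα ⊢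
  field_simp
  ring

theorem tendsto_U_atBot (hlam : lam ∈ Ico (-1 : ℝ) 0) (hf : Continuous f)
    (hmean : ∫ α in (0:ℝ)..1, f α = 0) (hm₀ : m₀ ∈ lowerBounds (f '' Icc 0 1)) (hm₀neg : m₀ < 0)
    (hα : f α = m₀) : Tendsto (U lam f α) (𝓝[<] (1 / (lam * m₀))) atBot := by
  set ηstar := 1 / (lam * m₀)
  have hηstar : 0 < ηstar := one_div_pos.mpr (mul_pos_of_neg_of_neg hlam.2 hm₀neg)
  obtain ⟨B, hB⟩ : ∃ B, ∀ η ∈ Icc 0 ηstar, |M lam f η| ≤ B :=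
    isCompact_Icc.exists_bound_of_continuousOn (continuous_M hlam hf).continuousOn
  have hmem : ∀ᶠ η in 𝓝[<] ηstar, η ∈ Ioo 0 ηstar := Ioo_mem_nhdsLT hηstar
  have hJ : ∀ᶠ η in 𝓝[<] ηstar, ∀ β ∈ Icc (0:ℝ) 1, 0 < J lam f β η := by
    filter_upwards [hmem] with η hη β hβ using J_pos hlam.2 hm₀neg hη (hm₀ ⟨β, hβ, rfl⟩)
  have hJα : Tendsto (J lam f α) (𝓝[<] ηstar) (𝓝[>] 0) := by
    refine tendsto_nhdsWithin_of_tendsto_nhds_of_eventually_within _ ?_ ?_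
    · have hJstar : J lam f α ηstar = 0 := by
        have := hlam.2.ne; have := hm₀neg.ne
        simp only [J, hα, ηstar]; field_simp; ring
      have hcont : Continuous (J lam f α) := by unfold J; fun_prop
      exact hJstar ▸ (hcont.tendsto ηstar).mono_left nhdsWithin_le_nhds
    · filter_upwards [hmem] with η hη using J_pos hlam.2 hm₀neg hη hα.ge
  have hbot : Tendsto (fun η => K lam f (-1 / lam) η ^ (-(2 * lam)) *
      (m₀ * (J lam f α η)⁻¹ - M lam f η / K lam f (-1 / lam) η)) (𝓝[<] ηstar) atBot := by
    refine Tendsto.mul_sub_atBot_of_one_le (B := B) ?_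
      (hJα.inv_tendsto_nhdsGT_zero.const_mul_atTop_of_neg hm₀neg) ?_
    · filter_upwards [hJ] with η hη
      exact Real.one_le_rpow (one_le_K hlam hf hmean fun β hβ => (hη β hβ).le) (by linarith [hlam.2])
    · filter_upwards [hJ, hmem] with η hJη hη
      have hK₀ := one_le_K hlam hf hmean fun β hβ => (hJη β hβ).le
      rw [abs_div, abs_of_pos (show 0 < K lam f (-1 / lam) η by linarith)]
      exact (div_le_self (abs_nonneg _) hK₀).trans (hB η (Ioo_subset_Icc_self hη))
  refine hbot.congr' ?_
  filter_upwards [hJ, hmem] with η hJη hη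
  rw [U_eq hlam hf hmean hη.1.ne' hJη (J_pos hlam.2 hm₀neg hη hα.ge).ne', hα, div_eq_mul_inv m₀]

theorem exists_abs_U_le (hlam : lam ∈ Ico (-1 : ℝ) 0) (hf : Continuous f)
    (hmean : ∫ α in (0:ℝ)..1, f α = 0) (hm₀ : m₀ ∈ lowerBounds (f '' Icc 0 1)) (hm₀neg : m₀ < 0)
    (hα : m₀ < f α) : ∃ C, ∀ η ∈ Ioo 0 (1 / (lam * m₀)), |U lam f α η| ≤ C := by
  obtain ⟨B₀, hB₀⟩ : ∃ B, ∀ η ∈ Icc 0 (1 / (lam * m₀)), |K lam f (-1 / lam) η| ≤ B :=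
    isCompact_Icc.exists_bound_of_continuousOn
      (continuous_K hf (by linarith [one_le_neg_one_div hlam])).continuousOn
  obtain ⟨B₁, hB₁⟩ : ∃ B, ∀ η ∈ Icc 0 (1 / (lam * m₀)), |M lam f η| ≤ B :=
    isCompact_Icc.exists_bound_of_continuousOn (continuous_M hlam hf).continuousOn
  set c := min 1 (1 - f α / m₀)
  have hc : 0 < c := lt_min one_pos (by linarith [(div_lt_one_of_neg hm₀neg).mpr hα])
  refine ⟨B₀ ^ (-(2 * lam)) * (|f α| / c + B₁), fun η hη => ?_⟩
  have hJ : ∀ β ∈ Icc (0:ℝ) 1, 0 < J lam f β η := fun β hβ =>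
    J_pos hlam.2 hm₀neg hη (hm₀ ⟨β, hβ, rfl⟩)
  have hK₀ := one_le_K hlam hf hmean fun β hβ => (hJ β hβ).le
  have hJα : c ≤ J lam f α η := min_le_J hlam.2 hη
  have hexp : 0 ≤ -(2 * lam) := by linarith [hlam.2]
  rw [U_eq hlam hf hmean hη.1.ne' hJ (hc.trans_le hJα).ne', abs_mul,
    abs_of_pos (Real.rpow_pos_of_pos (by linarith) _)]
  have hKB : K lam f (-1 / lam) η ≤ B₀ := (le_abs_self _).trans (hB₀ η (Ioo_subset_Icc_self hη))
  refine mul_le_mul (Real.rpow_le_rpow (by linarith) hKB hexp) ?_ (abs_nonneg _)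
    (Real.rpow_nonneg (by linarith) _)
  calc |f α / J lam f α η - M lam f η / K lam f (-1 / lam) η|
      ≤ |f α| / J lam f α η + |M lam f η| := by
        refine (abs_sub _ _).trans (add_le_add ?_ ?_)
        · rw [abs_div, abs_of_pos (hc.trans_le hJα)]
        · rw [abs_div, abs_of_pos (show 0 < K lam f (-1 / lam) η by linarith)]
          exact div_le_self (abs_nonneg _) hK₀
    _ ≤ |f α| / c + B₁ := by
        gcongr
        exact hB₁ η (Ioo_subset_Icc_self hη)

end ProudmanJohnson

theorem stmt17_general (lam : ℝ) (hlam : lam ∈ Ico (-1 : ℝ) 0)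
    (f : ℝ → ℝ) (hf : Continuous f)
    (hmean : (∫ α in (0:ℝ)..1, f α) = 0)
    (m₀ : ℝ) (hm₀ : IsLeast (f '' Icc 0 1) m₀) (hm₀neg : m₀ < 0) :
    let ηstar : ℝ := 1 / (lam * m₀)
    let J : ℝ → ℝ → ℝ := fun α η => 1 - lam * η * f α
    let K₀ : ℝ → ℝ := fun η => ∫ α in (0:ℝ)..1, J α η ^ (-1 / lam)
    let K₁ : ℝ → ℝ := fun η => ∫ α in (0:ℝ)..1, J α η ^ (-1 - 1 / lam)
    let U : ℝ → ℝ → ℝ := fun α η =>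
      (lam * η * K₀ η ^ (2 * lam))⁻¹ * ((J α η)⁻¹ - K₁ η / K₀ η)
    (∀ αm ∈ Icc (0:ℝ) 1, f αm = m₀ →
        Tendsto (fun η => U αm η) (𝓝[<] ηstar) atBot) ∧
    (∀ α ∈ Icc (0:ℝ) 1, m₀ < f α →
        ∃ C : ℝ, ∀ η ∈ Ioo (0:ℝ) ηstar, |U α η| ≤ C) :=
  ⟨fun _ _ hαm => ProudmanJohnson.tendsto_U_atBot hlam hf hmean hm₀.2 hm₀neg hαm,
    fun _ _ hα => ProudmanJohnson.exists_abs_U_le hlam hf hmean hm₀.2 hm₀neg hα⟩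

/-- One-sided, discrete blow-up for `λ ∈ [-1,0)` (Theorem 4.4): along the
representation formula `U(α,η)`, the value at any minimizer of `f` diverges
to `-∞` as `η → η*⁻`, while it stays bounded on `(0,η*)` at every other point. -/
theorem stmt17 (lam : ℝ) (hlam : lam ∈ Ico (-1 : ℝ) 0)
    (f : ℝ → ℝ) (hf : Continuous f) (hper : Function.Periodic f 1)
    (hnc : ∃ a b : ℝ, f a ≠ f b)
    (hmean : (∫ α in (0:ℝ)..1, f α) = 0)
    (m₀ : ℝ) (hm₀ : IsLeast (f '' Icc 0 1) m₀) (hm₀neg : m₀ < 0) :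
    let ηstar : ℝ := 1 / (lam * m₀)
    let J : ℝ → ℝ → ℝ := fun α η => 1 - lam * η * f α
    let K₀ : ℝ → ℝ := fun η => ∫ α in (0:ℝ)..1, J α η ^ (-1 / lam)
    let K₁ : ℝ → ℝ := fun η => ∫ α in (0:ℝ)..1, J α η ^ (-1 - 1 / lam)
    let U : ℝ → ℝ → ℝ := fun α η =>
      (lam * η * K₀ η ^ (2 * lam))⁻¹ * ((J α η)⁻¹ - K₁ η / K₀ η)
    (∀ αm ∈ Icc (0:ℝ) 1, f αm = m₀ →
        Tendsto (fun η => U αm η) (𝓝[<] ηstar) atBot) ∧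
    (∀ α ∈ Icc (0:ℝ) 1, m₀ < f α →
        ∃ C : ℝ, ∀ η ∈ Ioo (0:ℝ) ηstar, |U α η| ≤ C) :=
  stmt17_general lam hlam f hf hmean m₀ hm₀ hm₀neg
end
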